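/- Let η be the Marchenko–Pastur law and let k ≥ 1. Let D_k^{(L)} be the k×k lower-triangular matrix with entries (D_k^{(L)})_{i,j} = C(2i, i−j) − C(2i, i−j−1) for 1 ≤ j ≤ i ≤ k and 0 otherwise. Then for all 1 ≤ i, j ≤ k, (D_k^{(L)} (D_k^{(L)})^T)_{i,j} = m_{i+j}(η) − m_i(η)·m_j(η). -/
import Mathlib


open MeasureTheory Matrix

/-- The Marchenko–Pastur law `η(dx) = (√(x(4−x))/(2πx))·1_{(0,4)}(x) dx`. -/
noncomputable def marchenkoPastur : Measure ℝ :=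
  volume.withDensity fun x =>
    ENNReal.ofReal
      (if 0 < x ∧ x < 4 then Real.sqrt (x * (4 - x)) / (2 * Real.pi * x) else 0)

/-- The `r`-th moment of the Marchenko–Pastur law. -/
noncomputable def mMP (r : ℕ) : ℝ := ∫ x, x ^ r ∂marchenkoPastur

/-- Binomial coefficient `C(n, r)` with an integer lower argument,
with the convention `C(n, r) = 0` for `r < 0`. -/
noncomputable def chooseZ (n : ℕ) (r : ℤ) : ℝ :=
  if 0 ≤ r then (n.choose r.toNat : ℝ) else 0

/-- The lower-triangular matrix `D_k^{(L)}` (indices `1 ≤ i, j ≤ k`, here realised by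
`Fin k` with `i ↦ i+1`): entries `C(2i, i−j) − C(2i, i−j−1)` for `j ≤ i` and `0`
otherwise (with `C(2i, −1) = 0`). -/
noncomputable def DLag (k : ℕ) : Matrix (Fin k) (Fin k) ℝ := fun i j =>
  if j.1 ≤ i.1 then
    chooseZ (2 * (i.1 + 1)) ((i.1 : ℤ) - (j.1 : ℤ)) -
      chooseZ (2 * (i.1 + 1)) ((i.1 : ℤ) - (j.1 : ℤ) - 1)
  else 0


open MeasureTheory Real Set intervalIntegral Finset
open scoped NNReal ENNReal

/-- `bb I l = C(2I, I - l)` for `l ≤ I`, else `0`. -/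
noncomputable def bb (I l : ℕ) : ℝ := if l ≤ I then ((2 * I).choose (I - l) : ℝ) else 0

lemma bb_zero_of_gt {I l : ℕ} (h : I < l) : bb I l = 0 := by
  simp [bb, Nat.not_le.mpr h]

lemma catalan_cast (n : ℕ) :
    (catalan n : ℝ) = ((2 * n).choose n : ℝ) - ((2 * n).choose (n + 1) : ℝ) := by
  have h1 : (2 * n).choose (n + 1) * (n + 1) = (2 * n).choose n * n := by
    have := Nat.choose_succ_right_eq (2 * n) n
    simpa [two_mul, Nat.add_sub_cancel] using this
  have h2 : (n + 1) * catalan n = (2 * n).choose n := by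
    simpa [Nat.centralBinom] using succ_mul_catalan_eq_centralBinom n
  have h1' : ((2 * n).choose (n + 1) : ℝ) * ((n : ℝ) + 1) = ((2 * n).choose n : ℝ) * n := by
    exact_mod_cast congrArg (fun m : ℕ => (m : ℝ)) h1
  have h2' : ((n : ℝ) + 1) * (catalan n : ℝ) = ((2 * n).choose n : ℝ) := by
    exact_mod_cast congrArg (fun m : ℕ => (m : ℝ)) h2
  have hn : ((n : ℝ) + 1) ≠ 0 := by positivity
  nlinarith [h1', h2']

lemma vander_aux (I J c : ℕ) :
    (((2 * I + 2 * J).choose (I + J + c) : ℕ) : ℝ) =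
      ∑ l ∈ range (I + 1), ((2 * I).choose (I - l) : ℝ) * ((2 * J).choose (J + c + l) : ℝ) +
      ∑ t ∈ range (J + c), ((2 * I).choose (I + 1 + t) : ℝ) * ((2 * J).choose (J + c - 1 - t) : ℝ) := by
  have h := Nat.add_choose_eq (2 * I) (2 * J) (I + J + c)
  rw [Finset.Nat.sum_antidiagonal_eq_sum_range_succ_mk] at h
  have hsplit : I + J + c + 1 = (I + 1) + (J + c) := by ring
  simp only [Nat.succ_eq_add_one] at h
  rw [hsplit, Finset.sum_range_add] at h
  have h1 : ∑ m ∈ range (I + 1), (2 * I).choose m * (2 * J).choose (I + J + c - m) =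
      ∑ l ∈ range (I + 1), (2 * I).choose (I - l) * (2 * J).choose (J + c + l) := by
    rw [← Finset.sum_range_reflect]
    refine Finset.sum_congr rfl fun l hl => ?_
    have hl' : l ≤ I := by have := Finset.mem_range.mp hl; omega
    have e2 : I + J + c - (I + 1 - 1 - l) = J + c + l := by omega
    have e1 : I + 1 - 1 - l = I - l := by omega
    rw [e2, e1]
  have h2 : ∀ t ∈ range (J + c), (2 * I).choose (I + 1 + t) * (2 * J).choose (I + J + c - (I + 1 + t)) =
      (2 * I).choose (I + 1 + t) * (2 * J).choose (J + c - 1 - t) := by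
    intro t ht
    congr 2
    omega
  rw [h1, Finset.sum_congr rfl h2] at h
  exact_mod_cast congrArg (fun m : ℕ => (m : ℝ)) h

lemma bb_eq_hi (I l : ℕ) : bb I l = ((2 * I).choose (I + l) : ℝ) := by
  unfold bb
  split
  · next h =>
    have h2 : I + l ≤ 2 * I := by omega
    have := Nat.choose_symm h2
    have e : 2 * I - (I + l) = I - l := by omega
    rw [e] at this
    rw [this]
  · next h =>
    rw [Nat.choose_eq_zero_of_lt (by omega)]
    simp

lemma bb_eq_lo (I l : ℕ) (h : l ≤ I) : bb I l = ((2 * I).choose (I - l) : ℝ) := by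
  simp [bb, h]

lemma sum_pad_left (I J : ℕ) (f : ℕ → ℝ) (hf : ∀ l, I < l → bb I l * f l = 0) :
    ∑ l ∈ range (I + 1), bb I l * f l = ∑ l ∈ range (I + J + 1), bb I l * f l := by
  refine Finset.sum_subset (Finset.range_subset_range.mpr (by omega)) fun l _ hl => ?_
  exact hf l (by simpa using Finset.mem_range.not.mp hl)

lemma V0 (I J : ℕ) :
    ((2 * (I + J)).choose (I + J) : ℝ) =
      ∑ l ∈ range (I + J + 1), bb I l * bb J l +
      ∑ l ∈ range (I + J + 1), bb I (l + 1) * bb J (l + 1) := by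
  have h := vander_aux I J 0
  simp only [Nat.add_zero] at h
  have e1 : ∑ l ∈ range (I + 1), ((2 * I).choose (I - l) : ℝ) * ((2 * J).choose (J + l) : ℝ)
      = ∑ l ∈ range (I + J + 1), bb I l * bb J l := by
    rw [← sum_pad_left I J (fun l => bb J l) (fun l hl => by rw [bb_zero_of_gt hl, zero_mul])]
    refine Finset.sum_congr rfl fun l hl => ?_
    have hl' : l ≤ I := by have := Finset.mem_range.mp hl; omega
    rw [bb_eq_lo I l hl', bb_eq_hi J l]
  have e2 : ∑ t ∈ range J, ((2 * I).choose (I + 1 + t) : ℝ) * ((2 * J).choose (J - 1 - t) : ℝ)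
      = ∑ l ∈ range (I + J + 1), bb I (l + 1) * bb J (l + 1) := by
    have e3 : ∀ t, J < t + 1 → bb J (t + 1) * bb I (t + 1) = 0 := fun t ht => by
      rw [bb_zero_of_gt ht, zero_mul]
    calc ∑ t ∈ range J, ((2 * I).choose (I + 1 + t) : ℝ) * ((2 * J).choose (J - 1 - t) : ℝ)
        = ∑ t ∈ range (J + 1), bb J (t + 1) * bb I (t + 1) := by
          rw [Finset.sum_range_succ]
          have hz : bb J (J + 1) = 0 := bb_zero_of_gt (by omega)
          rw [hz, zero_mul, add_zero]
          refine Finset.sum_congr rfl fun t ht => ?_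
          have ht' : t < J := Finset.mem_range.mp ht
          have eA : (2 * I).choose (I + 1 + t) = (2 * I).choose (I + (t + 1)) := by
            congr 1; omega
          have eB : J - 1 - t = J - (t + 1) := by omega
          rw [eA, eB, ← bb_eq_hi I (t + 1), ← bb_eq_lo J (t + 1) (by omega)]
          ring
      _ = ∑ t ∈ range (J + I + 1), bb J (t + 1) * bb I (t + 1) := by
          refine Finset.sum_subset (Finset.range_subset_range.mpr (by omega)) fun l _ hl => ?_
          exact e3 l (by have := Finset.mem_range.not.mp hl; omega)
      _ = ∑ l ∈ range (I + J + 1), bb I (l + 1) * bb J (l + 1) := by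
          rw [show J + I + 1 = I + J + 1 by omega]
          exact Finset.sum_congr rfl fun l _ => by ring
  rw [show 2 * (I + J) = 2 * I + 2 * J by ring]
  rw [h, e1, e2]

lemma V1 (I J : ℕ) :
    ((2 * (I + J)).choose (I + J + 1) : ℝ) =
      ∑ l ∈ range (I + J + 1), bb I l * bb J (l + 1) +
      ∑ l ∈ range (I + J + 1), bb I (l + 1) * bb J l := by
  have h := vander_aux I J 1
  have e1 : ∑ l ∈ range (I + 1), ((2 * I).choose (I - l) : ℝ) * ((2 * J).choose (J + 1 + l) : ℝ)
      = ∑ l ∈ range (I + J + 1), bb I l * bb J (l + 1) := by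
    rw [← sum_pad_left I J (fun l => bb J (l + 1)) (fun l hl => by rw [bb_zero_of_gt hl, zero_mul])]
    refine Finset.sum_congr rfl fun l hl => ?_
    have hl' : l ≤ I := by have := Finset.mem_range.mp hl; omega
    rw [bb_eq_lo I l hl', bb_eq_hi J (l + 1), show J + (l + 1) = J + 1 + l by omega]
  have e2 : ∑ t ∈ range (J + 1), ((2 * I).choose (I + 1 + t) : ℝ) * ((2 * J).choose (J + 1 - 1 - t) : ℝ)
      = ∑ l ∈ range (I + J + 1), bb I (l + 1) * bb J l := by
    calc ∑ t ∈ range (J + 1), ((2 * I).choose (I + 1 + t) : ℝ) * ((2 * J).choose (J + 1 - 1 - t) : ℝ)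
        = ∑ t ∈ range (J + 1), bb I (t + 1) * bb J t := by
          refine Finset.sum_congr rfl fun t ht => ?_
          have ht' : t < J + 1 := Finset.mem_range.mp ht
          rw [show I + 1 + t = I + (t + 1) by omega, show J + 1 - 1 - t = J - t by omega,
            ← bb_eq_hi I (t + 1), ← bb_eq_lo J t (by omega)]
      _ = ∑ l ∈ range (I + J + 1), bb I (l + 1) * bb J l := by
          refine Finset.sum_subset (Finset.range_subset_range.mpr (by omega)) fun l _ hl => ?_
          have : J < l := by have := Finset.mem_range.not.mp hl; omega
          rw [bb_zero_of_gt this, mul_zero]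
  rw [show 2 * (I + J) = 2 * I + 2 * J by ring, h, e1, e2]

/-- The key ballot-number identity:
`∑_{l≥0} (b(I,l) − b(I,l+1))·(b(J,l) − b(J,l+1)) = catalan (I+J)` -/
lemma ballot_sum (I J : ℕ) :
    ∑ l ∈ range (I + J + 1), (bb I l - bb I (l + 1)) * (bb J l - bb J (l + 1)) =
      (catalan (I + J) : ℝ) := by
  have hP : ∑ l ∈ range (I + J + 1), bb I (l + 1) * bb J (l + 1) =
      ∑ l ∈ range (I + J + 1), bb I l * bb J l - bb I 0 * bb J 0 := by
    rw [Finset.sum_range_succ' (fun l => bb I l * bb J l) (I + J)]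
    have : bb I (I + J + 1) = 0 := bb_zero_of_gt (by omega)
    rw [Finset.sum_range_succ, this, zero_mul, add_zero]
    ring
  have hexp : ∑ l ∈ range (I + J + 1), (bb I l - bb I (l + 1)) * (bb J l - bb J (l + 1)) =
      (∑ l ∈ range (I + J + 1), bb I l * bb J l
        + ∑ l ∈ range (I + J + 1), bb I (l + 1) * bb J (l + 1))
      - (∑ l ∈ range (I + J + 1), bb I l * bb J (l + 1)
        + ∑ l ∈ range (I + J + 1), bb I (l + 1) * bb J l) := by
    rw [← Finset.sum_add_distrib, ← Finset.sum_add_distrib, ← Finset.sum_sub_distrib]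
    exact Finset.sum_congr rfl fun l _ => by ring
  rw [hexp, ← V0, ← V1, catalan_cast]

lemma Gamma_half (r : ℕ) :
    Real.Gamma ((r : ℝ) + 1 / 2) =
      ((2 * r).factorial : ℝ) * Real.sqrt π / (4 ^ r * (r.factorial : ℝ)) := by
  induction r with
  | zero => simpa using Real.Gamma_one_half_eq
  | succ n ih =>
    have h : ((n : ℝ) + 1) + 1 / 2 = ((n : ℝ) + 1 / 2) + 1 := by ring
    have hne : (n : ℝ) + 1 / 2 ≠ 0 := by positivity
    rw [Nat.cast_succ, h, Real.Gamma_add_one hne, ih]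
    have e1 : (2 * (n + 1)).factorial = (2 * n + 2) * ((2 * n + 1) * (2 * n).factorial) := by
      rw [show 2 * (n + 1) = 2 * n + 1 + 1 by ring, Nat.factorial_succ, Nat.factorial_succ]
    have e2 : (n + 1).factorial = (n + 1) * n.factorial := Nat.factorial_succ n
    rw [e1, e2]
    push_cast
    have h4 : (4 : ℝ) ^ n ≠ 0 := by positivity
    have hf : ((n.factorial : ℝ)) ≠ 0 := Nat.cast_ne_zero.mpr n.factorial_ne_zero
    field_simp
    ring

lemma beta_value (r : ℕ) :
    ∫ u in (0:ℝ)..1, u ^ ((r : ℝ) - 1 / 2) * (1 - u) ^ ((1 : ℝ) / 2) =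
      π * (catalan r : ℝ) / (2 * 4 ^ r) := by
  set B : ℝ := ∫ u in (0:ℝ)..1, u ^ ((r : ℝ) - 1 / 2) * (1 - u) ^ ((1 : ℝ) / 2) with hB
  have hu : (0 : ℝ) < (r : ℝ) + 1 / 2 := by positivity
  have key := Complex.Gamma_mul_Gamma_eq_betaIntegral
    (s := ((r : ℝ) + 1 / 2 : ℝ)) (t := ((3 : ℝ) / 2 : ℝ)) (by simpa using hu) (by norm_num)
  have hbeta : Complex.betaIntegral ((r : ℝ) + 1 / 2 : ℝ) ((3 : ℝ) / 2 : ℝ) = (B : ℂ) := by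
    rw [Complex.betaIntegral, hB, ← intervalIntegral.integral_ofReal]
    refine intervalIntegral.integral_congr fun x hx => ?_
    rw [Set.uIcc_of_le (by norm_num : (0:ℝ) ≤ 1)] at hx
    obtain ⟨hx0, hx1⟩ := hx
    have e1 : (((r : ℝ) + 1 / 2 : ℝ) : ℂ) - 1 = (((r : ℝ) - 1 / 2 : ℝ) : ℂ) := by
      push_cast; ring
    have e2 : (((3 : ℝ) / 2 : ℝ) : ℂ) - 1 = (((1 : ℝ) / 2 : ℝ) : ℂ) := by
      push_cast; ring
    rw [e1, e2, ← Complex.ofReal_cpow hx0, ← Complex.ofReal_one, ← Complex.ofReal_sub,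
      ← Complex.ofReal_cpow (by linarith), ← Complex.ofReal_mul]
  have hsum : (((r : ℝ) + 1 / 2 : ℝ) : ℂ) + (((3 : ℝ) / 2 : ℝ) : ℂ) = (((r : ℝ) + 2 : ℝ) : ℂ) := by
    push_cast; ring
  rw [hbeta, hsum, Complex.Gamma_ofReal, Complex.Gamma_ofReal, Complex.Gamma_ofReal,
    ← Complex.ofReal_mul, ← Complex.ofReal_mul] at key
  have keyR : Real.Gamma ((r : ℝ) + 1 / 2) * Real.Gamma (3 / 2) = Real.Gamma ((r : ℝ) + 2) * B :=
    Complex.ofReal_injective key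
  have h32 : Real.Gamma (3 / 2) = Real.sqrt π / 2 := by
    have : (3 : ℝ) / 2 = 1 / 2 + 1 := by norm_num
    rw [this, Real.Gamma_add_one (by norm_num), Real.Gamma_one_half_eq]
    ring
  have hr2 : Real.Gamma ((r : ℝ) + 2) = ((r + 1).factorial : ℝ) := by
    have : (r : ℝ) + 2 = ((r + 1 : ℕ) : ℝ) + 1 := by push_cast; ring
    rw [this, Real.Gamma_nat_eq_factorial]
  rw [Gamma_half, h32, hr2] at keyR
  have hcat : ((2 * r).factorial : ℝ) = ((r : ℝ) + 1) * (catalan r : ℝ) * (r.factorial : ℝ) * (r.factorial : ℝ) := by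
    have h1 : (r + 1) * catalan r = (2 * r).choose r := by
      simpa [Nat.centralBinom] using succ_mul_catalan_eq_centralBinom r
    have h2 : (r + 1) * catalan r * r.factorial * (2 * r - r).factorial = (2 * r).factorial :=
      Nat.choose_mul_factorial_mul_factorial (n := 2 * r) (k := r) (by omega) ▸ by rw [h1]
    rw [show 2 * r - r = r by omega] at h2
    have h3 := congrArg (fun m : ℕ => (m : ℝ)) h2
    push_cast at h3
    linarith [h3]
  have hf1 : ((r + 1).factorial : ℝ) = ((r : ℝ) + 1) * (r.factorial : ℝ) := by
    rw [Nat.factorial_succ]; push_cast; ring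
  rw [hcat, hf1] at keyR
  have hπ : Real.sqrt π * Real.sqrt π = π := Real.mul_self_sqrt Real.pi_pos.le
  set C : ℝ := ((r : ℝ) + 1) * (r.factorial : ℝ) * (r.factorial : ℝ) with hCdef
  have hC : C ≠ 0 := by
    have : (0:ℝ) < ((r : ℝ) + 1) * (r.factorial : ℝ) * (r.factorial : ℝ) := by positivity
    rw [hCdef]; exact ne_of_gt this
  have h4 : (0:ℝ) < 4 ^ r := by positivity
  rw [div_mul_eq_mul_div, div_eq_iff (by positivity : ((4:ℝ) ^ r * (r.factorial : ℝ)) ≠ 0)] at keyR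
  have hkey2 : C * ((catalan r : ℝ) * π) = C * (B * (2 * 4 ^ r)) := by
    calc C * ((catalan r : ℝ) * π)
        = 2 * (((r:ℝ)+1) * (catalan r : ℝ) * ↑r.factorial * ↑r.factorial * √π * (√π / 2)) := by
          rw [hCdef]
          linear_combination (((r:ℝ)+1) * (r.factorial : ℝ) * (r.factorial : ℝ) * (catalan r : ℝ)) * hπ.symm
      _ = 2 * (((r:ℝ)+1) * ↑r.factorial * B * (4 ^ r * ↑r.factorial)) := by
          rw [keyR]
      _ = C * (B * (2 * 4 ^ r)) := by rw [hCdef]; ring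
  have := mul_left_cancel₀ hC hkey2
  rw [eq_div_iff (by positivity : (2:ℝ) * 4 ^ r ≠ 0)]
  linarith [this]

lemma mMP_eq_catalan (r : ℕ) : mMP r = (catalan r : ℝ) := by
  set g : ℝ → ℝ := fun x => if 0 < x ∧ x < 4 then Real.sqrt (x * (4 - x)) / (2 * π * x) else 0
    with hgdef
  have hset : {x : ℝ | 0 < x ∧ x < 4} = Set.Ioo (0:ℝ) 4 := rfl
  have hg_meas : Measurable g := by
    refine Measurable.ite ?_ ?_ measurable_const
    · exact hset ▸ measurableSet_Ioo
    · exact ((measurable_id.mul (measurable_const.sub measurable_id)).sqrt).div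
        (measurable_const.mul measurable_id)
  have hg_nonneg : ∀ x, 0 ≤ g x := by
    intro x
    rw [hgdef]
    dsimp only
    split
    · next h =>
      have : (0:ℝ) < 2 * π * x := mul_pos (by positivity : (0:ℝ) < 2 * π) h.1
      exact div_nonneg (Real.sqrt_nonneg _) this.le
    · exact le_refl 0
  have step1 : mMP r = ∫ x, g x * x ^ r := by
    rw [mMP, marchenkoPastur]
    rw [show (fun x => ENNReal.ofReal
        (if 0 < x ∧ x < 4 then Real.sqrt (x * (4 - x)) / (2 * Real.pi * x) else 0)) =
        fun x => (((g x).toNNReal : ℝ≥0) : ℝ≥0∞) from rfl]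
    rw [integral_withDensity_eq_integral_smul (hg_meas.real_toNNReal) (fun x : ℝ => x ^ r)]
    refine integral_congr_ae (Filter.Eventually.of_forall fun x => ?_)
    dsimp only
    rw [NNReal.smul_def, Real.coe_toNNReal _ (hg_nonneg x), smul_eq_mul]
  have step2 : (∫ x, g x * x ^ r) =
      ∫ x in Set.Ioo (0:ℝ) 4, Real.sqrt (x * (4 - x)) / (2 * π * x) * x ^ r := by
    rw [← MeasureTheory.integral_indicator measurableSet_Ioo]
    refine integral_congr_ae (Filter.Eventually.of_forall fun x => ?_)
    rw [hgdef, Set.indicator_apply]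
    simp only [Set.mem_Ioo]
    by_cases h : 0 < x ∧ x < 4 <;> simp [h]
  have step3 : (∫ x in Set.Ioo (0:ℝ) 4, Real.sqrt (x * (4 - x)) / (2 * π * x) * x ^ r) =
      ∫ x in Set.Ioo (0:ℝ) 4, (2 * π)⁻¹ * (x ^ ((r:ℝ) - 1/2) * (4 - x) ^ ((1:ℝ)/2)) := by
    refine setIntegral_congr_fun measurableSet_Ioo fun x hx => ?_
    obtain ⟨hx0, hx4⟩ := hx
    have hπ : (0:ℝ) < π := Real.pi_pos
    rw [Real.sqrt_mul hx0.le, Real.sqrt_eq_rpow, Real.sqrt_eq_rpow,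
      show ((r:ℝ) - 1/2) = ((r:ℝ) + 1/2) + (-1) by ring,
      Real.rpow_add hx0, Real.rpow_add hx0, Real.rpow_neg_one, ← Real.rpow_natCast x r]
    field_simp
  have step4 : (∫ x in Set.Ioo (0:ℝ) 4, (2 * π)⁻¹ * (x ^ ((r:ℝ) - 1/2) * (4 - x) ^ ((1:ℝ)/2))) =
      (2 * π)⁻¹ * ∫ x in (0:ℝ)..4, x ^ ((r:ℝ) - 1/2) * (4 - x) ^ ((1:ℝ)/2) := by
    rw [intervalIntegral.integral_of_le (by norm_num : (0:ℝ) ≤ 4),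
      MeasureTheory.integral_Ioc_eq_integral_Ioo, ← MeasureTheory.integral_const_mul]
  have step6 : (∫ x in (0:ℝ)..4, x ^ ((r:ℝ) - 1/2) * (4 - x) ^ ((1:ℝ)/2)) =
      4 * ∫ x in (0:ℝ)..1, (4*x) ^ ((r:ℝ) - 1/2) * (4 - 4*x) ^ ((1:ℝ)/2) := by
    have h := intervalIntegral.smul_integral_comp_mul_left
      (fun x : ℝ => x ^ ((r:ℝ) - 1/2) * (4 - x) ^ ((1:ℝ)/2)) (a := 0) (b := 1) 4
    norm_num at h
    rw [← h]
  have step7 : (∫ x in (0:ℝ)..1, (4*x) ^ ((r:ℝ) - 1/2) * (4 - 4*x) ^ ((1:ℝ)/2)) =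
      (4:ℝ) ^ ((r:ℝ) - 1/2) * (4:ℝ) ^ ((1:ℝ)/2) *
        ∫ x in (0:ℝ)..1, x ^ ((r:ℝ) - 1/2) * (1 - x) ^ ((1:ℝ)/2) := by
    rw [← intervalIntegral.integral_const_mul]
    refine intervalIntegral.integral_congr fun x hx => ?_
    rw [Set.uIcc_of_le (by norm_num : (0:ℝ) ≤ 1)] at hx
    obtain ⟨hx0, hx1⟩ := hx
    rw [Real.mul_rpow (by norm_num) hx0, show (4:ℝ) - 4*x = 4 * (1 - x) by ring,
      Real.mul_rpow (by norm_num) (by linarith)]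
    ring
  rw [step1, step2, step3, step4, step6, step7, beta_value]
  have h45 : (4:ℝ) ^ ((r:ℝ) - 1/2) * (4:ℝ) ^ ((1:ℝ)/2) = 4 ^ r := by
    rw [← Real.rpow_add (by norm_num : (0:ℝ) < 4), show ((r:ℝ) - 1/2) + 1/2 = (r:ℝ) by ring,
      Real.rpow_natCast]
  rw [h45]
  have hπ : π ≠ 0 := Real.pi_ne_zero
  have h4 : ((4:ℝ)) ^ r ≠ 0 := by positivity
  field_simp
  ring

lemma bb_catalan (I : ℕ) (hI : 1 ≤ I) : bb I 0 - bb I 1 = (catalan I : ℝ) := by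
  rw [bb_eq_lo I 0 (by omega), bb_eq_lo I 1 hI, Nat.sub_zero]
  have h : (2 * I).choose (I - 1) = (2 * I).choose (I + 1) := by
    have h2 : I + 1 ≤ 2 * I := by omega
    have := Nat.choose_symm h2
    rw [show 2 * I - (I + 1) = I - 1 by omega] at this
    exact this
  rw [h, ← catalan_cast]

lemma DLag_entry (k : ℕ) (a l : Fin k) :
    DLag k a l = bb (a.1 + 1) (l.1 + 1) - bb (a.1 + 1) (l.1 + 2) := by
  simp only [DLag]
  by_cases h : l.1 ≤ a.1
  · rw [if_pos h]
    have h1 : (0:ℤ) ≤ (a.1 : ℤ) - (l.1 : ℤ) := by omega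
    have ht1 : ((a.1 : ℤ) - (l.1 : ℤ)).toNat = a.1 - l.1 := by omega
    rw [chooseZ, if_pos h1, ht1]
    rw [bb_eq_lo (a.1 + 1) (l.1 + 1) (by omega), show a.1 + 1 - (l.1 + 1) = a.1 - l.1 by omega]
    by_cases h2 : l.1 < a.1
    · have h3 : (0:ℤ) ≤ (a.1 : ℤ) - (l.1 : ℤ) - 1 := by omega
      have ht2 : ((a.1 : ℤ) - (l.1 : ℤ) - 1).toNat = a.1 - l.1 - 1 := by omega
      rw [chooseZ, if_pos h3, ht2]
      rw [bb_eq_lo (a.1 + 1) (l.1 + 2) (by omega),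
        show a.1 + 1 - (l.1 + 2) = a.1 - l.1 - 1 by omega]
    · have hl : l.1 = a.1 := by omega
      have h3 : ¬ (0:ℤ) ≤ (a.1 : ℤ) - (l.1 : ℤ) - 1 := by omega
      rw [chooseZ, if_neg h3, bb_zero_of_gt (by omega : a.1 + 1 < l.1 + 2)]
  · rw [if_neg h, bb_zero_of_gt (by omega : a.1 + 1 < l.1 + 1),
      bb_zero_of_gt (by omega : a.1 + 1 < l.1 + 2)]
    ring

lemma sum_trunc (I J M : ℕ) (hM : I ≤ M) :
    ∑ l ∈ Finset.range M, (bb I (l + 1) - bb I (l + 2)) * (bb J (l + 1) - bb J (l + 2)) =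
    ∑ l ∈ Finset.range I, (bb I (l + 1) - bb I (l + 2)) * (bb J (l + 1) - bb J (l + 2)) := by
  refine (Finset.sum_subset (Finset.range_subset_range.mpr hM) fun l _ hl => ?_).symm
  have hI : I ≤ l := by have := Finset.mem_range.not.mp hl; omega
  rw [bb_zero_of_gt (by omega : I < l + 1), bb_zero_of_gt (by omega : I < l + 2), sub_zero,
    zero_mul]

/-- The covariance representation for the Laguerre ensemble:
`(D_k^{(L)} (D_k^{(L)})^T)_{i,j} = m_{i+j}(η) − m_i(η)·m_j(η)`, where `η` is the
Marchenko–Pastur law. -/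
theorem DLag_mul_transpose_eq_marchenkoPastur_cov (k : ℕ) (hk : 1 ≤ k) (i j : Fin k) :
    (DLag k * (DLag k)ᵀ) i j =
      mMP ((i.1 + 1) + (j.1 + 1)) - mMP (i.1 + 1) * mMP (j.1 + 1) := by
  set I := i.1 + 1 with hI
  set J := j.1 + 1 with hJ
  have hIk : I ≤ k := i.2
  rw [Matrix.mul_apply]
  simp only [Matrix.transpose_apply]
  have hsum : ∑ l : Fin k, DLag k i l * DLag k j l =
      ∑ l ∈ Finset.range k, (bb I (l + 1) - bb I (l + 2)) * (bb J (l + 1) - bb J (l + 2)) := by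
    rw [← Fin.sum_univ_eq_sum_range
      (fun l => (bb I (l + 1) - bb I (l + 2)) * (bb J (l + 1) - bb J (l + 2))) k]
    exact Finset.sum_congr rfl fun l _ => by rw [DLag_entry k i l, DLag_entry k j l]
  rw [hsum, sum_trunc I J k hIk, ← sum_trunc I J (I + J) (by omega)]
  have hb := ballot_sum I J
  rw [Finset.sum_range_succ'
    (fun l => (bb I l - bb I (l + 1)) * (bb J l - bb J (l + 1))) (I + J)] at hb
  have h0 : (bb I 0 - bb I (0 + 1)) * (bb J 0 - bb J (0 + 1)) =
      (catalan I : ℝ) * (catalan J : ℝ) := by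
    rw [show (0 : ℕ) + 1 = 1 from rfl, bb_catalan I (by omega), bb_catalan J (by omega)]
  rw [h0] at hb
  have he : ∑ l ∈ Finset.range (I + J),
      (bb I (l + 1) - bb I (l + 1 + 1)) * (bb J (l + 1) - bb J (l + 1 + 1)) =
      ∑ l ∈ Finset.range (I + J), (bb I (l + 1) - bb I (l + 2)) * (bb J (l + 1) - bb J (l + 2)) :=
    Finset.sum_congr rfl fun l _ => by norm_num
  rw [he] at hb
  rw [mMP_eq_catalan, mMP_eq_catalan, mMP_eq_catalan]
  rw [show i.1 + 1 + (j.1 + 1) = I + J by omega]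
  linarith [hb]
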